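/- Let Ω ⊆ ℍ be an axially symmetric s-domain and let i, k ∈ 𝕊². If f ∈ A_k(Ω), then f ∈ A_i(Ω) and ‖f‖_{A_i(Ω)} ≤ √2 ‖f‖_{A_k(Ω)}. Consequently A_i(Ω) and A_k(Ω) coincide as sets of functions and carry equivalent norms. -/

import Mathlib

noncomputable section

open MeasureTheory Filter

notation "ℍ" => Quaternion ℝ

/-- The set of pure imaginary unit quaternions `𝕊²`. -/
def Sph2 (i : ℍ) : Prop := i.re = 0 ∧ ‖i‖ = 1

/-- Ordered pairs of orthogonal pure imaginary unit quaternions (the set `T`). -/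
def OrthPair (i j : ℍ) : Prop := Sph2 i ∧ Sph2 j ∧ (i * star j).re = 0

/-- The slice complex plane `ℂ(i) = {x + y i}`. -/
def CC (i : ℍ) : Set ℍ := {q | ∃ x y : ℝ, q = (x : ℍ) + y • i}

/-- Slice regularity of `f` on `Ω`: real differentiability together with the
Cauchy–Riemann condition `½(∂/∂x + i ∂/∂y) f = 0` on every slice. -/
def SliceRegularOn (f : ℍ → ℍ) (Ω : Set ℍ) : Prop :=
  ∀ ⦃i : ℍ⦄, Sph2 i → ∀ x y : ℝ, ((x : ℍ) + y • i) ∈ Ω →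
    DifferentiableAt ℝ f ((x : ℍ) + y • i) ∧
    fderiv ℝ f ((x : ℍ) + y • i) 1 + i * fderiv ℝ f ((x : ℍ) + y • i) i = 0

/-- Axially symmetric slice domain. -/
structure AxSymSDomain (Ω : Set ℍ) : Prop where
  isOpen : IsOpen Ω
  isConnected : IsConnected Ω
  real_nonempty : (Ω ∩ Set.range ((↑) : ℝ → ℍ)).Nonempty
  slice_connected : ∀ ⦃i : ℍ⦄, Sph2 i →
    IsConnected {p : ℝ × ℝ | ((p.1 : ℍ) + p.2 • i) ∈ Ω}
  axial : ∀ (x y : ℝ) ⦃i : ℍ⦄, Sph2 i → ((x : ℍ) + y • i) ∈ Ω →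
    ∀ ⦃j : ℍ⦄, Sph2 j → ((x : ℍ) + y • j) ∈ Ω

/-- The slice `Ω ∩ ℂ(i)` as a subset of `ℝ²`. -/
def sliceSet (Ω : Set ℍ) (i : ℍ) : Set (ℝ × ℝ) := {p | ((p.1 : ℍ) + p.2 • i) ∈ Ω}

/-- `‖f‖²_{A_i(Ω)} = ∫_{Ω ∩ ℂ(i)} ‖f‖² dσ_i`. -/
def bergmanNormSq (Ω : Set ℍ) (i : ℍ) (f : ℍ → ℍ) : ℝ :=
  ∫ p in sliceSet Ω i, ‖f ((p.1 : ℍ) + p.2 • i)‖ ^ 2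

/-- The slice regular Bergman norm `‖f‖_{A_i(Ω)}`. -/
def bergmanNorm (Ω : Set ℍ) (i : ℍ) (f : ℍ → ℍ) : ℝ :=
  Real.sqrt (bergmanNormSq Ω i f)

/-- Membership in the slice regular Bergman space `A_i(Ω)`. -/
def MemBergman (Ω : Set ℍ) (i : ℍ) (f : ℍ → ℍ) : Prop :=
  SliceRegularOn f Ω ∧
  IntegrableOn (fun p : ℝ × ℝ => ‖f ((p.1 : ℍ) + p.2 • i)‖ ^ 2) (sliceSet Ω i)

/-- The quaternionic Bergman inner product `⟨f,g⟩ = ∫ conj(f) g dσ_i`. -/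
def bergmanInner (Ω : Set ℍ) (i : ℍ) (f g : ℍ → ℍ) : ℍ :=
  ∫ p in sliceSet Ω i, star (f ((p.1 : ℍ) + p.2 • i)) * g ((p.1 : ℍ) + p.2 • i)

/-- The open unit ball `𝔹⁴ ⊆ ℍ`. -/
def B4 : Set ℍ := {q | ‖q‖ < 1}

/-- The open unit disk `D ⊆ ℝ²`. -/
def unitDisk : Set (ℝ × ℝ) := {p | p.1 ^ 2 + p.2 ^ 2 < 1}

/-- `‖f‖²_{A_i(𝔹⁴)} = ∫_D ‖f(x + yi)‖² dμ(x,y)`. -/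
def bergNormSqB (i : ℍ) (f : ℍ → ℍ) : ℝ :=
  ∫ p in unitDisk, ‖f ((p.1 : ℍ) + p.2 • i)‖ ^ 2

/-- The Bergman norm on `A_i(𝔹⁴)`. -/
def bergNormB (i : ℍ) (f : ℍ → ℍ) : ℝ := Real.sqrt (bergNormSqB i f)

/-- Membership in `A_i(𝔹⁴)`. -/
def MemBergB (i : ℍ) (f : ℍ → ℍ) : Prop :=
  SliceRegularOn f B4 ∧
  IntegrableOn (fun p : ℝ × ℝ => ‖f ((p.1 : ℍ) + p.2 • i)‖ ^ 2) unitDisk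

open Classical in
/-- `I_q`: the imaginary unit direction of `q` (an arbitrary fixed unit when `q` is real). -/
def Imu (q : ℍ) : ℍ := if q.im = 0 then ⟨0, 1, 0, 0⟩ else ‖q.im‖⁻¹ • q.im

/-- The extension operator `P_{k,·}`: for a slice function `g : ℝ² → ℍ` (representing
`x + y k ↦ g(x,y)`), `Pext k g (q) = ½[(1 + I_q k) g(x, −y) + (1 − I_q k) g(x, y)]`
where `q = x + I_q y`, `y = ‖im q‖ ≥ 0`. -/
def Pext (k : ℍ) (g : ℝ × ℝ → ℍ) (q : ℍ) : ℍ :=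
  (2⁻¹ : ℝ) • ((1 + Imu q * k) * g (q.re, -‖q.im‖) + (1 - Imu q * k) * g (q.re, ‖q.im‖))

/-- The slice function `x + y k ↦ a + b k + c l + d kl`. -/
def sliceFun (a b c d : ℝ × ℝ → ℝ) (k l : ℍ) (p : ℝ × ℝ) : ℍ :=
  (a p : ℍ) + b p • k + c p • l + d p • (k * l)

/-- `L²(D)` norm of a real function on the unit disk. -/
def L2D (a : ℝ × ℝ → ℝ) : ℝ := Real.sqrt (∫ p in unitDisk, a p ^ 2)

/-- Finiteness of the `L²(D)` norm. -/
def MemL2D (a : ℝ × ℝ → ℝ) : Prop := IntegrableOn (fun p => a p ^ 2) unitDisk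

/-- Harmonicity on the unit disk: `a` is `C²` and `∂²a/∂x² + ∂²a/∂y² = 0`. -/
def HarmonicOnDisk (a : ℝ × ℝ → ℝ) : Prop :=
  ContDiffOn ℝ 2 a unitDisk ∧ ∀ p ∈ unitDisk,
    fderiv ℝ (fun q => fderiv ℝ a q (1, 0)) p (1, 0)
      + fderiv ℝ (fun q => fderiv ℝ a q (0, 1)) p (0, 1) = 0

/-- `(a,b)` is a pair of conjugate harmonic functions on `D`:
both harmonic and satisfying the Cauchy–Riemann equations. -/
def ConjHarmPair (a b : ℝ × ℝ → ℝ) : Prop :=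
  HarmonicOnDisk a ∧ HarmonicOnDisk b ∧
  ∀ p ∈ unitDisk,
    fderiv ℝ a p (1, 0) = fderiv ℝ b p (0, 1) ∧
    fderiv ℝ a p (0, 1) = -fderiv ℝ b p (1, 0)

/-- `(a,b) ∈ HL²(D)`. -/
def HLpair (a b : ℝ × ℝ → ℝ) : Prop := ConjHarmPair a b ∧ MemL2D a ∧ MemL2D b

/-- Raw data of an element of `HL(D)`: a 2×2 matrix `(a b; c d)` of real functions
on the disk together with a pair `(k,l)` of quaternions. -/
structure HLElem where
  a : ℝ × ℝ → ℝ
  b : ℝ × ℝ → ℝ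
  c : ℝ × ℝ → ℝ
  d : ℝ × ℝ → ℝ
  k : ℍ
  l : ℍ

/-- Membership in `HL(D)`: `(a,b),(c,d) ∈ HL²(D)` and `(k,l) ∈ T`. -/
def HLElem.mem (A : HLElem) : Prop := HLpair A.a A.b ∧ HLpair A.c A.d ∧ OrthPair A.k A.l

/-- The bundle projection `P_{𝔹⁴}((a b; c d),(k,l)) = P_{k,l}[a + bk + cl + dkl]`. -/
def HLElem.proj (A : HLElem) : ℍ → ℍ := Pext A.k (sliceFun A.a A.b A.c A.d A.k A.l)

/-- The metric of `HL(D)`. -/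
def HLdist (A B : HLElem) : ℝ :=
  L2D (A.a - B.a) + L2D (A.b - B.b) + L2D (A.c - B.c) + L2D (A.d - B.d)
    + Real.sqrt (‖A.k - B.k‖ ^ 2 + ‖A.l - B.l‖ ^ 2)

/-- `Q_{k,l}[f] : (x,y) ↦ f(x + y k)`, the restriction of `f` to the slice `ℂ(k)`. -/
def Qsl (f : ℍ → ℍ) (k : ℍ) (p : ℝ × ℝ) : ℍ := f ((p.1 : ℍ) + p.2 • k)

/-- `D₁[f,k,l] = (Q[f] + conj(Q[f]))/2 = Re (Q[f])`. -/
def Dc1 (f : ℍ → ℍ) (k _l : ℍ) (p : ℝ × ℝ) : ℝ := (Qsl f k p).re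

/-- `D₂[f,k,l] = −(Q[f]·k + conj(Q[f]·k))/2 = −Re (Q[f]·k)`. -/
def Dc2 (f : ℍ → ℍ) (k _l : ℍ) (p : ℝ × ℝ) : ℝ := -(Qsl f k p * k).re

/-- `D₃[f,k,l] = −(Q[f]·l + conj(Q[f]·l))/2 = −Re (Q[f]·l)`. -/
def Dc3 (f : ℍ → ℍ) (k l : ℍ) (p : ℝ × ℝ) : ℝ := -(Qsl f k p * l).re

/-- `D₄[f,k,l] = (Q[f]·lk + conj(Q[f]·lk))/2 = Re (Q[f]·(lk))`. -/
def Dc4 (f : ℍ → ℍ) (k l : ℍ) (p : ℝ × ℝ) : ℝ := (Qsl f k p * (l * k)).re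

/-- The section map `S_{k,l}[f] = ((D₁ D₂; D₃ D₄), (k,l))`. -/
def Smap (f : ℍ → ℍ) (k l : ℍ) : HLElem :=
  ⟨Dc1 f k l, Dc2 f k l, Dc3 f k l, Dc4 f k l, k, l⟩

/-- The metric `ρ_i` on `A_i(𝔹⁴) × T`. -/
def rhoA (i : ℍ) (f : ℍ → ℍ) (k l : ℍ) (g : ℍ → ℍ) (m n : ℍ) : ℝ :=
  bergNormB i (f - g) + Real.sqrt (‖k - m‖ ^ 2 + ‖l - n‖ ^ 2)

/-!
On a slice `ℂ(i)` a slice regular function is holomorphic for the complex structure on `ℍ` given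
by left multiplication by `i`. Composing with the complex functionals `q ↦ Re (w q) - Re (w i q) I`
reduces the identity principle to the classical one, and since both sides agree on the real axis
this yields the representation formula
`f (x + y i) = ½ [(1 + i k) f (x - y k) + (1 - i k) f (x + y k)]`.
As `‖1 + i k‖² + ‖1 - i k‖² = 4`, Cauchy–Schwarz gives
`‖f (x + y i)‖² ≤ ‖f (x + y k)‖² + ‖f (x - y k)‖²`, and integrating over the slice, which is
invariant under `y ↦ -y`, gives `‖f‖²_{A_i(Ω)} ≤ 2 ‖f‖²_{A_k(Ω)}`.
-/

open Topology

lemma Sph2.mul_self {i : ℍ} (hi : Sph2 i) : i * i = -1 := by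
  have h : i * star i = 1 := by
    rw [Quaternion.self_mul_star, Quaternion.normSq_eq_norm_mul_self, hi.2, one_mul,
      Quaternion.coe_one]
  rwa [Quaternion.star_eq_neg.2 hi.1, mul_neg, neg_eq_iff_eq_neg] at h

lemma Sph2.neg {i : ℍ} (hi : Sph2 i) : Sph2 (-i) :=
  ⟨by simp [hi.1], by simp [hi.2]⟩

lemma Quaternion.eq_of_forall_re_mul_eq {p q : ℍ} (h : ∀ w : ℍ, (w * p).re = (w * q).re) :
    p = q := by
  have hd : (star (p - q) * (p - q)).re = 0 := by
    rw [mul_sub, Quaternion.re_sub, h, sub_self]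
  rw [Quaternion.star_mul_self, Quaternion.re_coe, Quaternion.normSq_eq_zero] at hd
  exact sub_eq_zero.mp hd

/-- `F : ℂ → ℍ` is holomorphic on `U` for the complex structure on `ℍ` given by left
multiplication by `i`. -/
def IsLeftHolomorphicOn (i : ℍ) (F : ℂ → ℍ) (U : Set ℂ) : Prop :=
  ∀ z ∈ U, ∃ L : ℂ →L[ℝ] ℍ, HasFDerivAt F L z ∧ L Complex.I = i * L 1

namespace IsLeftHolomorphicOn

variable {i : ℍ} {F G : ℂ → ℍ} {U : Set ℂ}

lemma add (hF : IsLeftHolomorphicOn i F U) (hG : IsLeftHolomorphicOn i G U) :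
    IsLeftHolomorphicOn i (fun z => F z + G z) U := by
  intro z hz
  obtain ⟨L, hL, hLI⟩ := hF z hz
  obtain ⟨M, hM, hMI⟩ := hG z hz
  exact ⟨L + M, hL.add hM, by simp [hLI, hMI, mul_add]⟩

lemma const_smul (hF : IsLeftHolomorphicOn i F U) (r : ℝ) :
    IsLeftHolomorphicOn i (fun z => r • F z) U := by
  intro z hz
  obtain ⟨L, hL, hLI⟩ := hF z hz
  exact ⟨r • L, hL.const_smul r, by simp [hLI]⟩

lemma const_mul {j c : ℍ} (hF : IsLeftHolomorphicOn j F U) (hc : c * j = i * c) :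
    IsLeftHolomorphicOn i (fun z => c * F z) U := by
  intro z hz
  obtain ⟨L, hL, hLI⟩ := hF z hz
  refine ⟨(ContinuousLinearMap.mul ℝ ℍ c).comp L, hL.const_mul c, ?_⟩
  simp [hLI, ← mul_assoc, hc]

end IsLeftHolomorphicOn

def reMulCLM (i w : ℍ) : ℍ →L[ℝ] ℂ :=
  LinearMap.toContinuousLinearMap
  { toFun := fun q => ⟨(w * q).re, -(w * (i * q)).re⟩
    map_add' := fun q q' => by
      apply Complex.ext <;>
        simp only [mul_add, Quaternion.re_add, Complex.add_re, Complex.add_im, neg_add]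
    map_smul' := fun r q => by
      apply Complex.ext <;>
        simp only [mul_smul_comm, Quaternion.re_smul, Complex.real_smul, Complex.mul_re,
          Complex.mul_im, Complex.ofReal_re, Complex.ofReal_im, smul_eq_mul, RingHom.id_apply] <;>
        ring }

lemma reMulCLM_apply (i w q : ℍ) :
    reMulCLM i w q = ⟨(w * q).re, -(w * (i * q)).re⟩ := rfl

lemma reMulCLM_mul_left {i : ℍ} (hi : i * i = -1) (w q : ℍ) :
    reMulCLM i w (i * q) = Complex.I * reMulCLM i w q := by
  have h : i * (i * q) = -q := by rw [← mul_assoc, hi, neg_one_mul]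
  apply Complex.ext <;> simp [reMulCLM_apply, h]

lemma IsLeftHolomorphicOn.differentiableOn_reMulCLM {i : ℍ} (hi : i * i = -1) {F : ℂ → ℍ}
    {U : Set ℂ} (hF : IsLeftHolomorphicOn i F U) (w : ℍ) :
    DifferentiableOn ℂ (fun z => reMulCLM i w (F z)) U := by
  intro z hz
  obtain ⟨L, hL, hLI⟩ := hF z hz
  have hcomp := (reMulCLM i w).hasFDerivAt.comp z hL
  refine (hcomp.complexOfReal_hasFDerivAt ?_).differentiableAt.differentiableWithinAt
  simp [hLI, reMulCLM_mul_left hi]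

theorem IsLeftHolomorphicOn.eqOn_of_preconnected_of_frequently_eq {i : ℍ} (hi : i * i = -1)
    {F G : ℂ → ℍ} {U : Set ℂ} (hF : IsLeftHolomorphicOn i F U) (hG : IsLeftHolomorphicOn i G U)
    (hU : IsOpen U) (hUc : IsPreconnected U) {z₀ : ℂ} (hz₀ : z₀ ∈ U)
    (hfreq : ∃ᶠ z in 𝓝[≠] z₀, F z = G z) : Set.EqOn F G U := by
  intro z hz
  refine Quaternion.eq_of_forall_re_mul_eq fun w => ?_
  have hFw := (hF.differentiableOn_reMulCLM hi w).analyticOnNhd hU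
  have hGw := (hG.differentiableOn_reMulCLM hi w).analyticOnNhd hU
  exact congrArg Complex.re <| hFw.eqOn_of_preconnected_of_frequently_eq hGw hUc hz₀
    (hfreq.mono fun z hz => by rw [hz]) hz

def sliceEmbedding (u : ℍ) : ℂ →L[ℝ] ℍ :=
  Complex.reCLM.smulRight 1 + Complex.imCLM.smulRight u

lemma sliceEmbedding_apply (u : ℍ) (z : ℂ) : sliceEmbedding u z = (z.re : ℍ) + z.im • u := by
  simp [sliceEmbedding, ← Quaternion.coe_one, Quaternion.smul_coe]

lemma preimage_sliceEmbedding (Ω : Set ℍ) (u : ℍ) :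
    sliceEmbedding u ⁻¹' Ω = Complex.equivRealProd ⁻¹' sliceSet Ω u := by
  ext z
  simp [sliceSet, sliceEmbedding_apply]

lemma continuous_slice (u : ℍ) : Continuous fun p : ℝ × ℝ => (p.1 : ℍ) + p.2 • u :=
  (Quaternion.continuous_coe.comp continuous_fst).add (continuous_snd.smul continuous_const)

lemma IsOpen.sliceSet {Ω : Set ℍ} (hΩ : IsOpen Ω) (u : ℍ) : IsOpen (sliceSet Ω u) :=
  hΩ.preimage (continuous_slice u)

namespace AxSymSDomain

variable {Ω : Set ℍ} {i k : ℍ}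

lemma sliceSet_eq (hΩ : AxSymSDomain Ω) (hi : Sph2 i) (hk : Sph2 k) : sliceSet Ω i = sliceSet Ω k :=
  Set.ext fun p => ⟨fun h => hΩ.axial p.1 p.2 hi h hk, fun h => hΩ.axial p.1 p.2 hk h hi⟩

lemma preimage_sliceEmbedding_eq (hΩ : AxSymSDomain Ω) (hi : Sph2 i) (hk : Sph2 k) :
    sliceEmbedding i ⁻¹' Ω = sliceEmbedding k ⁻¹' Ω := by
  rw [preimage_sliceEmbedding, preimage_sliceEmbedding, hΩ.sliceSet_eq hi hk]

lemma preimage_sliceSet_reflect (hΩ : AxSymSDomain Ω) (hk : Sph2 k) :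
    (fun p : ℝ × ℝ => (p.1, -p.2)) ⁻¹' sliceSet Ω k = sliceSet Ω k := by
  ext p
  conv_rhs => rw [← hΩ.sliceSet_eq hk.neg hk]
  simp [sliceSet, smul_neg]

end AxSymSDomain

lemma SliceRegularOn.isLeftHolomorphicOn {Ω : Set ℍ} {f : ℍ → ℍ} (hf : SliceRegularOn f Ω)
    {u : ℍ} (hu : Sph2 u) :
    IsLeftHolomorphicOn u (fun z => f (sliceEmbedding u z)) (sliceEmbedding u ⁻¹' Ω) := by
  intro z hz
  rw [Set.mem_preimage, sliceEmbedding_apply] at hz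
  obtain ⟨hd, hcr⟩ := hf hu z.re z.im hz
  rw [← sliceEmbedding_apply] at hd hcr
  refine ⟨(fderiv ℝ f _).comp (sliceEmbedding u),
    hd.hasFDerivAt.comp z (sliceEmbedding u).hasFDerivAt, ?_⟩
  have hcr' := congrArg (u * ·) hcr
  simp only [mul_add, ← mul_assoc, hu.mul_self, neg_one_mul, mul_zero] at hcr'
  simpa [sliceEmbedding_apply] using (add_neg_eq_zero.mp hcr').symm

lemma one_add_mul_mul_neg {i k : ℍ} (hi : i * i = -1) (hk : k * k = -1) :
    (1 + i * k) * -k = i * (1 + i * k) := by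
  have : i * k * -k = i := by rw [mul_neg, mul_assoc, hk, mul_neg_one, neg_neg]
  rw [add_mul, this, mul_add, ← mul_assoc, hi]
  noncomm_ring

lemma one_sub_mul_mul {i k : ℍ} (hi : i * i = -1) (hk : k * k = -1) :
    (1 - i * k) * k = i * (1 - i * k) := by
  have : i * k * k = -i := by rw [mul_assoc, hk, mul_neg_one]
  rw [sub_mul, this, mul_sub, ← mul_assoc, hi]
  noncomm_ring

lemma Complex.frequently_im_eq_zero_nhdsNE (x : ℝ) : ∃ᶠ z in 𝓝[≠] (x : ℂ), z.im = 0 := by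
  have h : Tendsto ((↑) : ℝ → ℂ) (𝓝[≠] x) (𝓝[≠] (x : ℂ)) :=
    Complex.continuous_ofReal.continuousWithinAt.tendsto_nhdsWithin fun t ht => by simpa using ht
  exact h.frequently (Frequently.of_forall Complex.ofReal_im)

theorem SliceRegularOn.representation_formula {Ω : Set ℍ} (hΩ : AxSymSDomain Ω) {f : ℍ → ℍ}
    (hf : SliceRegularOn f Ω) {i k : ℍ} (hi : Sph2 i) (hk : Sph2 k) {x y : ℝ}
    (hxy : (x, y) ∈ sliceSet Ω k) :
    f (x + y • i) = (2⁻¹ : ℝ) • ((1 + i * k) * f (x + y • -k) + (1 - i * k) * f (x + y • k)) := by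
  have hU : IsOpen (sliceEmbedding k ⁻¹' Ω) := hΩ.isOpen.preimage (sliceEmbedding k).continuous
  have hUc : IsPreconnected (sliceEmbedding k ⁻¹' Ω) := by
    rw [preimage_sliceEmbedding]
    exact (Complex.equivRealProdCLM.toHomeomorph.isPreconnected_preimage).2
      (hΩ.slice_connected hk).isPreconnected
  have hF : IsLeftHolomorphicOn i (fun z => f (sliceEmbedding i z)) (sliceEmbedding k ⁻¹' Ω) := by
    rw [← hΩ.preimage_sliceEmbedding_eq hi hk]
    exact hf.isLeftHolomorphicOn hi
  have hG : IsLeftHolomorphicOn i (fun z => (2⁻¹ : ℝ) • ((1 + i * k) * f (sliceEmbedding (-k) z)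
      + (1 - i * k) * f (sliceEmbedding k z))) (sliceEmbedding k ⁻¹' Ω) := by
    have hFneg := hf.isLeftHolomorphicOn hk.neg
    rw [hΩ.preimage_sliceEmbedding_eq hk.neg hk] at hFneg
    refine ((hFneg.const_mul ?_).add ((hf.isLeftHolomorphicOn hk).const_mul ?_)).const_smul _
    · exact one_add_mul_mul_neg hi.mul_self hk.mul_self
    · exact one_sub_mul_mul hi.mul_self hk.mul_self
  obtain ⟨_, hx₀, x₀, rfl⟩ := hΩ.real_nonempty
  have hx₀U : sliceEmbedding k x₀ ∈ Ω := by simpa [sliceEmbedding_apply] using hx₀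
  have hreal : ∃ᶠ z in 𝓝[≠] (x₀ : ℂ), f (sliceEmbedding i z) = (2⁻¹ : ℝ) •
      ((1 + i * k) * f (sliceEmbedding (-k) z) + (1 - i * k) * f (sliceEmbedding k z)) := by
    refine (Complex.frequently_im_eq_zero_nhdsNE x₀).mono fun z hz => ?_
    simp only [sliceEmbedding_apply, hz, zero_smul, add_zero, ← add_mul, add_add_sub_cancel]
    rw [one_add_one_eq_two, two_mul, ← two_smul ℝ, smul_smul, inv_mul_cancel₀ two_ne_zero, one_smul]
  have := hF.eqOn_of_preconnected_of_frequently_eq hi.mul_self hG hU hUc hx₀U hreal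
    (show sliceEmbedding k ⟨x, y⟩ ∈ Ω by simpa [sliceEmbedding_apply, sliceSet] using hxy)
  simpa [sliceEmbedding_apply] using this

lemma norm_sq_inv_two_smul_le {u : ℍ} (hu : ‖u‖ = 1) (a b : ℍ) :
    ‖(2⁻¹ : ℝ) • ((1 + u) * a + (1 - u) * b)‖ ^ 2 ≤ ‖a‖ ^ 2 + ‖b‖ ^ 2 := by
  have hpar : ‖1 + u‖ ^ 2 + ‖1 - u‖ ^ 2 = 4 := by
    rw [parallelogram_law_with_norm ℝ, norm_one, hu]
    norm_num
  have htri : ‖(2⁻¹ : ℝ) • ((1 + u) * a + (1 - u) * b)‖ ≤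
      2⁻¹ * (‖1 + u‖ * ‖a‖ + ‖1 - u‖ * ‖b‖) := by
    rw [norm_smul, Real.norm_of_nonneg (by norm_num), ← norm_mul, ← norm_mul]
    gcongr
    exact norm_add_le _ _
  -- Cauchy–Schwarz for `(‖1 + u‖, ‖1 - u‖)` and `(‖a‖, ‖b‖)`
  nlinarith [sq_nonneg (‖1 + u‖ * ‖b‖ - ‖1 - u‖ * ‖a‖),
    norm_nonneg ((2⁻¹ : ℝ) • ((1 + u) * a + (1 - u) * b)), norm_nonneg (1 + u),
    norm_nonneg (1 - u), norm_nonneg a, norm_nonneg b]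

theorem integrableOn_and_setIntegral_le_two_mul_of_norm_le_add_comp {α : Type*}
    [MeasurableSpace α] {μ : Measure α} {T : α → α} (hT : MeasurePreserving T μ μ)
    (hTe : MeasurableEmbedding T) {S : Set α} (hS : MeasurableSet S) (hTS : T ⁻¹' S = S)
    {g h : α → ℝ} (hg : IntegrableOn g S μ) (hh : AEStronglyMeasurable h (μ.restrict S))
    (hle : ∀ p ∈ S, ‖h p‖ ≤ g p + g (T p)) :
    IntegrableOn h S μ ∧ ∫ p in S, h p ∂μ ≤ 2 * ∫ p in S, g p ∂μ := by
  have hgT : IntegrableOn (fun p => g (T p)) S μ := by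
    have h := (hT.integrableOn_comp_preimage hTe).2 hg
    rwa [hTS] at h
  have hintT : ∫ p in S, g (T p) ∂μ = ∫ p in S, g p ∂μ := by
    simpa [hTS] using hT.setIntegral_preimage_emb hTe g S
  have hint : IntegrableOn h S μ :=
    (hg.add hgT).mono' hh ((ae_restrict_iff' hS).2 (Eventually.of_forall hle))
  refine ⟨hint, ?_⟩
  calc ∫ p in S, h p ∂μ ≤ ∫ p in S, (g p + g (T p)) ∂μ :=
        setIntegral_mono_on hint (hg.add hgT) hS fun p hp => (Real.le_norm_self _).trans (hle p hp)
    _ = 2 * ∫ p in S, g p ∂μ := by rw [integral_add hg hgT, hintT, two_mul]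

lemma SliceRegularOn.continuousOn_slice {Ω : Set ℍ} {f : ℍ → ℍ} (hf : SliceRegularOn f Ω)
    {i : ℍ} (hi : Sph2 i) : ContinuousOn (fun p : ℝ × ℝ => f (p.1 + p.2 • i)) (sliceSet Ω i) :=
  fun p hp => ((hf hi p.1 p.2 hp).1.continuousAt.comp (f := fun p : ℝ × ℝ => (p.1 : ℍ) + p.2 • i)
    (continuous_slice i).continuousAt).continuousWithinAt

theorem MemBergman.memBergman_and_bergmanNormSq_le {Ω : Set ℍ} (hΩ : AxSymSDomain Ω)
    {i k : ℍ} (hi : Sph2 i) (hk : Sph2 k) {f : ℍ → ℍ} (hf : MemBergman Ω k f) :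
    MemBergman Ω i f ∧ bergmanNormSq Ω i f ≤ 2 * bergmanNormSq Ω k f := by
  obtain ⟨hreg, hint⟩ := hf
  have hT : MeasurePreserving (fun p : ℝ × ℝ => (p.1, -p.2)) :=
    (MeasurePreserving.id volume).prod (Measure.measurePreserving_neg volume)
  have hTe : MeasurableEmbedding (fun p : ℝ × ℝ => (p.1, -p.2)) :=
    ((Homeomorph.refl ℝ).prodCongr (Homeomorph.neg ℝ)).toMeasurableEquiv.measurableEmbedding
  have hmeas : AEStronglyMeasurable (fun p : ℝ × ℝ => ‖f (p.1 + p.2 • i)‖ ^ 2)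
      (volume.restrict (sliceSet Ω k)) := by
    rw [← hΩ.sliceSet_eq hi hk]
    exact ((hreg.continuousOn_slice hi).norm.pow 2).aestronglyMeasurable
      (hΩ.isOpen.sliceSet i).measurableSet
  have hle : ∀ p ∈ sliceSet Ω k, ‖‖f (p.1 + p.2 • i)‖ ^ 2‖ ≤
      ‖f (p.1 + p.2 • k)‖ ^ 2 + ‖f (p.1 + (-p.2) • k)‖ ^ 2 := by
    intro p hp
    rw [norm_pow, norm_norm, hreg.representation_formula hΩ hi hk hp, add_comm (‖_‖ ^ 2),
      neg_smul, ← smul_neg]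
    exact norm_sq_inv_two_smul_le (by rw [norm_mul, hi.2, hk.2, one_mul]) _ _
  obtain ⟨hint_i, hineq⟩ := integrableOn_and_setIntegral_le_two_mul_of_norm_le_add_comp hT hTe
    (hΩ.isOpen.sliceSet k).measurableSet (hΩ.preimage_sliceSet_reflect hk) hint hmeas hle
  rw [← hΩ.sliceSet_eq hi hk] at hint_i
  exact ⟨⟨hreg, hint_i⟩, by rwa [bergmanNormSq, bergmanNormSq, hΩ.sliceSet_eq hi hk]⟩

/-- If `f ∈ A_k(Ω)` then `f ∈ A_i(Ω)` with `‖f‖_{A_i} ≤ √2 ‖f‖_{A_k}`; consequently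
`A_i(Ω)` and `A_k(Ω)` coincide as sets of functions (with equivalent norms). -/
theorem bergman_slices_equivalent (Ω : Set ℍ) (hΩ : AxSymSDomain Ω)
    (i k : ℍ) (hi : Sph2 i) (hk : Sph2 k)
    (f : ℍ → ℍ) (hf : MemBergman Ω k f) :
    MemBergman Ω i f ∧
    bergmanNorm Ω i f ≤ Real.sqrt 2 * bergmanNorm Ω k f ∧
    (∀ g : ℍ → ℍ, MemBergman Ω i g ↔ MemBergman Ω k g) := by
  obtain ⟨hmem, hsq⟩ := hf.memBergman_and_bergmanNormSq_le hΩ hi hk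
  refine ⟨hmem, ?_, fun g => ⟨fun hg => (hg.memBergman_and_bergmanNormSq_le hΩ hk hi).1,
    fun hg => (hg.memBergman_and_bergmanNormSq_le hΩ hi hk).1⟩⟩
  rw [bergmanNorm, bergmanNorm, ← Real.sqrt_mul zero_le_two]
  exact Real.sqrt_le_sqrt hsq
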